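/- Let π be a probability row 4-vector with all entries positive, Π = diag(π), and let Pᵃ, Pᵇ be invertible 4×4 strand-symmetric matrices. Define J = (Pᵇ)ᵀ Π Pᵃ and G = S J⁻¹ S J. Then G = (Pᵃ)⁻¹ D Pᵃ, where D = diag(π(1)/π(4), π(2)/π(3), π(3)/π(2), π(4)/π(1)). -/

import Mathlib

/-!
Since `S` is a symmetric involution commuting with `Pᵃ`, `Pᵇ` (hence with `(Pᵃ)⁻¹` and
`(Pᵇ)ᵀ`), conjugating `J⁻¹ = (Pᵃ)⁻¹ Π⁻¹ ((Pᵇ)ᵀ)⁻¹` by `S` moves `S` through both factors: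
`S J⁻¹ S J = (Pᵃ)⁻¹ (S Π⁻¹ S Π) Pᵃ`. As `S` is the permutation matrix of `i ↦ 3 - i`,
`S Π⁻¹ S` is diagonal with entries `1 / π (3 - i)`, so `S Π⁻¹ S Π = D`.
-/

open Matrix

noncomputable def S : Matrix (Fin 4) (Fin 4) ℝ :=
  Matrix.of fun i j => if (i : ℕ) + (j : ℕ) = 3 then 1 else 0

theorem Commute.of_mul_mul_eq {M : Type*} [Monoid M] {s m : M} (hs : s * s = 1)
    (h : s * m * s = m) : Commute s m :=
  calc s * m = s * m * (s * s) := by rw [hs, mul_one]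
    _ = m * s := by rw [← mul_assoc, h]

namespace Matrix

variable {n K : Type*} [Fintype n]

theorem commute_transpose [CommSemiring K] {A B : Matrix n n K} (h : Commute A B) :
    Commute Aᵀ Bᵀ := by
  rw [Commute, SemiconjBy, ← transpose_mul, ← transpose_mul, h.eq]

variable [DecidableEq n]

theorem inv_diagonal_of_ne_zero [Field K] {v : n → K} (hv : ∀ i, v i ≠ 0) :
    (diagonal v)⁻¹ = diagonal v⁻¹ :=
  inv_eq_left_inv <| by
    rw [diagonal_mul_diagonal, ← diagonal_one]
    congr 1
    ext i
    exact inv_mul_cancel₀ (hv i)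

variable [CommRing K]

theorem commute_nonsing_inv {A B : Matrix n n K} (h : Commute A B) : Commute A⁻¹ B⁻¹ := by
  simpa only [nonsing_inv_eq_ringInverse] using h.ringInverse_ringInverse

theorem nonsing_inv_mul_mul_cancel_of_commute {A B : Matrix n n K} (hB : IsUnit B)
    (h : Commute A B) : B⁻¹ * A * B = A := by
  rw [mul_assoc, h.eq, nonsing_inv_mul_cancel_left _ _ ((isUnit_iff_isUnit_det B).mp hB)]

theorem mul_nonsing_inv_mul_mul_eq_conj {S Pa Pb Λ : Matrix n n K} (hS : S * S = 1)
    (hSt : Sᵀ = S) (ha : S * Pa * S = Pa) (hb : S * Pb * S = Pb) (hPb : IsUnit Pb) :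
    S * (Pbᵀ * Λ * Pa)⁻¹ * S * (Pbᵀ * Λ * Pa) = Pa⁻¹ * (S * Λ⁻¹ * S * Λ) * Pa := by
  have hSa : Commute S Pa⁻¹ := by
    simpa only [inv_eq_left_inv hS] using commute_nonsing_inv (Commute.of_mul_mul_eq hS ha)
  have hSb : Pbᵀ⁻¹ * S * Pbᵀ = S :=
    nonsing_inv_mul_mul_cancel_of_commute ((isUnit_transpose _).mpr hPb)
      (hSt ▸ commute_transpose (Commute.of_mul_mul_eq hS hb))
  calc S * (Pbᵀ * Λ * Pa)⁻¹ * S * (Pbᵀ * Λ * Pa)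
      = S * Pa⁻¹ * Λ⁻¹ * (Pbᵀ⁻¹ * S * Pbᵀ) * Λ * Pa := by
        simp only [mul_inv_rev, mul_assoc]
    _ = Pa⁻¹ * (S * Λ⁻¹ * S * Λ) * Pa := by
        rw [hSb, hSa.eq]
        simp only [mul_assoc]

end Matrix

theorem S_eq_permMatrix : S = Fin.revPerm.permMatrix ℝ := by
  ext i j
  simp only [S, of_apply, PEquiv.toMatrix_apply, Equiv.toPEquiv_apply, Fin.revPerm_apply,
    Option.mem_def, Option.some.injEq, Fin.ext_iff, Fin.val_rev]
  congr 1
  exact propext (by omega)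

theorem S_mul_mul_S (M : Matrix (Fin 4) (Fin 4) ℝ) :
    S * M * S = M.submatrix Fin.rev Fin.rev := by
  rw [S_eq_permMatrix, PEquiv.toMatrix_toPEquiv_mul, PEquiv.mul_toMatrix_toPEquiv,
    submatrix_submatrix]
  rfl

theorem S_mul_S : S * S = 1 := by
  simpa using (S_mul_mul_S 1).trans (submatrix_one_equiv Fin.revPerm)

theorem S_transpose : Sᵀ = S := by
  rw [S_eq_permMatrix, transpose_permMatrix]
  rfl

theorem S_mul_diagonal_mul_S (v : Fin 4 → ℝ) :
    S * diagonal v * S = diagonal (v ∘ Fin.rev) := by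
  rw [S_mul_mul_S]
  exact submatrix_diagonal_equiv v Fin.revPerm

theorem S_mul_inv_diagonal_mul_S_mul_diagonal {π : Fin 4 → ℝ} (hπ : ∀ i, π i ≠ 0) :
    S * (diagonal π)⁻¹ * S * diagonal π = diagonal fun i => π i / π i.rev := by
  rw [inv_diagonal_of_ne_zero hπ, S_mul_diagonal_mul_S, diagonal_mul_diagonal]
  congr 1
  ext i
  simp [div_eq_inv_mul]

theorem G_eigendecomposition_general (π : Fin 4 → ℝ)
    (hpos : ∀ i, 0 < π i)
    (Pa Pb : Matrix (Fin 4) (Fin 4) ℝ)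
    (hPb : IsUnit Pb)
    (hssa : S * Pa * S = Pa) (hssb : S * Pb * S = Pb) :
    S * (Pbᵀ * diagonal π * Pa)⁻¹ * S * (Pbᵀ * diagonal π * Pa) =
      Pa⁻¹ * diagonal ![π 0 / π 3, π 1 / π 2, π 2 / π 1, π 3 / π 0] * Pa := by
  rw [mul_nonsing_inv_mul_mul_eq_conj S_mul_S S_transpose hssa hssb hPb,
    S_mul_inv_diagonal_mul_S_mul_diagonal fun i => (hpos i).ne']
  congr 3
  ext i
  fin_cases i <;> rfl

/-- The eigendecomposition at the heart of Lemma 1: G = S J⁻¹ S J = (Pᵃ)⁻¹ D Pᵃ. -/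
theorem G_eigendecomposition (π : Fin 4 → ℝ)
    (hpos : ∀ i, 0 < π i) (hsum : ∑ i, π i = 1)
    (Pa Pb : Matrix (Fin 4) (Fin 4) ℝ)
    (hPa : IsUnit Pa) (hPb : IsUnit Pb)
    (hssa : S * Pa * S = Pa) (hssb : S * Pb * S = Pb) :
    S * (Pbᵀ * diagonal π * Pa)⁻¹ * S * (Pbᵀ * diagonal π * Pa) =
      Pa⁻¹ * diagonal ![π 0 / π 3, π 1 / π 2, π 2 / π 1, π 3 / π 0] * Pa :=
  G_eigendecomposition_general π hpos Pa Pb hPb hssa hssb
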